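/- Let A be a traceless 2×2 complex matrix, let z₁,…,z₄ ∈ ℂ and j₁,…,j₄ > 0. Then ∏ᵢ ⟨v(zᵢ), exp(A*)·exp(A)·v(zᵢ)⟩^{jᵢ} = exp( ∫₀¹ Σᵢ jᵢ · ⟨exp(tA)v(zᵢ), (A+A*)·exp(tA)v(zᵢ)⟩ / ‖exp(tA)v(zᵢ)‖² dt ), where both sides are positive real numbers (A* is the conjugate transpose and exp(A*)exp(A) is positive definite). (Point 3 of the paper's Proposition: the squared modulus of ρ_{e^{A}} is the exponential of the integral of the Hamiltonian H_{A−A*} along the flow.) -/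

import Mathlib

open Matrix

/-- The unit spinor `v(z) = (1+|z|²)^(−1/2) (z,1)ᵀ ∈ ℂ²`. -/
noncomputable def vspin (z : ℂ) : Fin 2 → ℂ :=
  ![z / (Real.sqrt (1 + ‖z‖ ^ 2) : ℝ), 1 / (Real.sqrt (1 + ‖z‖ ^ 2) : ℝ)]

/-- Hermitian inner product on ℂ², conjugate-linear in the first argument. -/
def inner2 (u w : Fin 2 → ℂ) : ℂ :=
  starRingEnd ℂ (u 0) * w 0 + starRingEnd ℂ (u 1) * w 1

/-!
Put `xᵢ(t) = exp(tA) v(zᵢ)` and `fᵢ(t) = ‖xᵢ(t)‖²`. Since `xᵢ' = A xᵢ`, we get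
`fᵢ' = ⟨xᵢ, (A + A*) xᵢ⟩`, so the integrand is `∑ᵢ jᵢ (log fᵢ)'` and the integral equals
`∑ᵢ jᵢ (log fᵢ(1) − log fᵢ(0))`. Here `fᵢ(0) = ‖v(zᵢ)‖² = 1`, `fᵢ > 0` because `exp(tA)` is
invertible, and `fᵢ(1) = ⟨v(zᵢ), exp(A*) exp(A) v(zᵢ)⟩` because `exp(A*) = exp(A)*`.
-/

theorem HasDerivAt.dotProduct {𝕜 𝔸 n : Type*} [NontriviallyNormedField 𝕜] [NormedCommRing 𝔸]
    [NormedAlgebra 𝕜 𝔸] [Fintype n] {u w : 𝕜 → n → 𝔸} {u' w' : n → 𝔸} {t : 𝕜}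
    (hu : HasDerivAt u u' t) (hw : HasDerivAt w w' t) :
    HasDerivAt (fun s => u s ⬝ᵥ w s) (u' ⬝ᵥ w t + u t ⬝ᵥ w') t := by
  simp only [_root_.dotProduct, ← Finset.sum_add_distrib]
  exact HasDerivAt.fun_sum fun i _ => (hasDerivAt_pi.1 hu i).mul (hasDerivAt_pi.1 hw i)

open intervalIntegral in
theorem exp_integral_sum_mul_div_eq_prod_rpow {ι : Type*} (s : Finset ι) {f f' : ι → ℝ → ℝ}
    {a b : ℝ} (j : ι → ℝ) (hf : ∀ i ∈ s, ∀ t ∈ Set.uIcc a b, HasDerivAt (f i) (f' i t) t)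
    (hpos : ∀ i ∈ s, ∀ t ∈ Set.uIcc a b, 0 < f i t)
    (hf' : ∀ i ∈ s, ContinuousOn (f' i) (Set.uIcc a b)) :
    Real.exp (∫ t in a..b, ∑ i ∈ s, j i * (f' i t / f i t)) = ∏ i ∈ s, (f i b / f i a) ^ j i := by
  have hlog : ∀ t ∈ Set.uIcc a b, HasDerivAt (fun t => ∑ i ∈ s, j i * Real.log (f i t))
      (∑ i ∈ s, j i * (f' i t / f i t)) t := fun t ht =>
    HasDerivAt.fun_sum fun i hi => ((hf i hi t ht).log (hpos i hi t ht).ne').const_mul (j i)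
  have hcont : ContinuousOn (fun t => ∑ i ∈ s, j i * (f' i t / f i t)) (Set.uIcc a b) :=
    continuousOn_finsetSum s fun i hi => continuousOn_const.mul <| (hf' i hi).div
      (fun t ht => (hf i hi t ht).continuousAt.continuousWithinAt) fun t ht => (hpos i hi t ht).ne'
  rw [integral_eq_sub_of_hasDerivAt hlog hcont.intervalIntegrable, ← Finset.sum_sub_distrib,
    Real.exp_sum]
  refine Finset.prod_congr rfl fun i hi => ?_
  have ha := hpos i hi a Set.left_mem_uIcc
  have hb := hpos i hi b Set.right_mem_uIcc
  rw [← mul_sub, ← Real.log_div hb.ne' ha.ne', Real.rpow_def_of_pos (div_pos hb ha), mul_comm]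

namespace Matrix

variable {n : Type*} [Fintype n]

open scoped ComplexOrder in
theorem re_star_dotProduct_self_pos {v : n → ℂ} (hv : v ≠ 0) : 0 < (star v ⬝ᵥ v).re :=
  (Complex.pos_iff.mp (dotProduct_star_self_pos_iff.mpr hv)).1

theorem star_dotProduct_conjTranspose_mul_self_mulVec {R : Type*} [CommRing R] [StarRing R]
    (M : Matrix n n R) (v : n → R) : star v ⬝ᵥ (Mᴴ * M) *ᵥ v = star (M *ᵥ v) ⬝ᵥ M *ᵥ v := by
  rw [← mulVec_mulVec, dotProduct_mulVec, star_mulVec]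

variable [DecidableEq n]

theorem exp_mulVec_ne_zero (A : Matrix n n ℂ) {v : n → ℂ} (hv : v ≠ 0) :
    NormedSpace.exp A *ᵥ v ≠ 0 := fun h =>
  hv <| mulVec_injective_iff_isUnit.mpr (isUnit_exp A) (h.trans (mulVec_zero _).symm)

open scoped Matrix.Norms.L2Operator

theorem hasDerivAt_exp_smul_mulVec (A : Matrix n n ℂ) (v : n → ℂ) (t : ℝ) :
    HasDerivAt (fun s : ℝ => NormedSpace.exp (s • A) *ᵥ v)
      (A *ᵥ NormedSpace.exp (t • A) *ᵥ v) t := by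
  let mulVecCLM : Matrix n n ℂ →L[ℝ] n → ℂ := LinearMap.toContinuousLinearMap
    { toFun := (· *ᵥ v), map_add' := fun M N => add_mulVec M N v
      map_smul' := fun c M => smul_mulVec c M v }
  rw [mulVec_mulVec]
  exact mulVecCLM.hasFDerivAt.comp_hasDerivAt t (hasDerivAt_exp_smul_const' A t)

theorem hasDerivAt_re_star_dotProduct_exp_smul_mulVec (A : Matrix n n ℂ) (v : n → ℂ) (t : ℝ) :
    HasDerivAt
      (fun s : ℝ => (star (NormedSpace.exp (s • A) *ᵥ v) ⬝ᵥ NormedSpace.exp (s • A) *ᵥ v).re)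
      (star (NormedSpace.exp (t • A) *ᵥ v) ⬝ᵥ (A + Aᴴ) *ᵥ NormedSpace.exp (t • A) *ᵥ v).re t := by
  have hx := hasDerivAt_exp_smul_mulVec A v t
  have hre := Complex.reCLM.hasFDerivAt.comp_hasDerivAt t (hx.star.dotProduct hx)
  rwa [Complex.reCLM_apply, star_mulVec, ← dotProduct_mulVec, ← dotProduct_add, ← add_mulVec,
    add_comm] at hre

theorem continuous_exp_smul_mulVec (A : Matrix n n ℂ) (v : n → ℂ) :
    Continuous fun t : ℝ => NormedSpace.exp (t • A) *ᵥ v :=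
  continuous_iff_continuousAt.2 fun t => (hasDerivAt_exp_smul_mulVec A v t).continuousAt

end Matrix

theorem inner2_eq_star_dotProduct (u w : Fin 2 → ℂ) : inner2 u w = star u ⬝ᵥ w := by
  simp [inner2, dotProduct, Fin.sum_univ_two]

theorem star_vspin_dotProduct_self (z : ℂ) : star (vspin z) ⬝ᵥ vspin z = 1 := by
  have hpos : (0 : ℝ) < 1 + ‖z‖ ^ 2 := by positivity
  have hsq : ((Real.sqrt (1 + ‖z‖ ^ 2) : ℝ) : ℂ) ^ 2 = 1 + ‖z‖ ^ 2 := by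
    norm_cast; exact Real.sq_sqrt hpos.le
  have hs : ((Real.sqrt (1 + ‖z‖ ^ 2) : ℝ) : ℂ) ≠ 0 := by
    exact_mod_cast (Real.sqrt_pos.2 hpos).ne'
  simp only [vspin, dotProduct, Fin.sum_univ_two, Pi.star_apply, cons_val_zero, cons_val_one,
    Complex.star_def, map_div₀, Complex.conj_ofReal, map_one]
  rw [div_mul_div_comm, div_mul_div_comm, ← sq, hsq, mul_comm, Complex.mul_conj,
    Complex.normSq_eq_norm_sq]
  have hne : (1 + (‖z‖ : ℂ) ^ 2) ≠ 0 := hsq ▸ pow_ne_zero 2 hs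
  field_simp
  push_cast
  ring

theorem vspin_ne_zero (z : ℂ) : vspin z ≠ 0 := fun h => by
  simpa [h] using star_vspin_dotProduct_self z

theorem rho_sq_eq_exp_integral_hamiltonian_general
    (A : Matrix (Fin 2) (Fin 2) ℂ)
    (z : Fin 4 → ℂ) (j : Fin 4 → ℝ) :
    (∏ i, ((inner2 (vspin (z i))
        ((NormedSpace.exp Aᴴ * NormedSpace.exp A).mulVec (vspin (z i)))).re) ^ (j i)) =
      Real.exp (∫ t in (0:ℝ)..1, ∑ i, j i *
        ((inner2 ((NormedSpace.exp (t • A)).mulVec (vspin (z i)))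
            ((A + Aᴴ).mulVec ((NormedSpace.exp (t • A)).mulVec (vspin (z i))))).re /
          (inner2 ((NormedSpace.exp (t • A)).mulVec (vspin (z i)))
            ((NormedSpace.exp (t • A)).mulVec (vspin (z i)))).re)) := by
  simp only [inner2_eq_star_dotProduct]
  rw [exp_integral_sum_mul_div_eq_prod_rpow]
  · simp only [exp_conjTranspose, star_dotProduct_conjTranspose_mul_self_mulVec, zero_smul,
      one_smul, NormedSpace.exp_zero, one_mulVec, star_vspin_dotProduct_self, Complex.one_re,
      div_one]
  case hf => exact fun i _ t _ => hasDerivAt_re_star_dotProduct_exp_smul_mulVec A _ t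
  case hpos =>
    exact fun i _ t _ => re_star_dotProduct_self_pos (exp_mulVec_ne_zero _ (vspin_ne_zero _))
  case hf' =>
    intro i _
    have := continuous_exp_smul_mulVec A (vspin (z i))
    fun_prop

/-- Point 3 of the Proposition: for traceless `A`, the positive number
`∏ᵢ ⟨v(zᵢ), exp(A*) exp(A) v(zᵢ)⟩^{jᵢ}` equals the exponential of the integral over `t ∈ [0,1]`
of the Hamiltonian `H_{A−A*}` evaluated along the flow `exp(tA) v(zᵢ)`. -/
theorem rho_sq_eq_exp_integral_hamiltonian
    (A : Matrix (Fin 2) (Fin 2) ℂ) (hA : A.trace = 0)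
    (z : Fin 4 → ℂ) (j : Fin 4 → ℝ) (hj : ∀ i, 0 < j i) :
    (∏ i, ((inner2 (vspin (z i))
        ((NormedSpace.exp Aᴴ * NormedSpace.exp A).mulVec (vspin (z i)))).re) ^ (j i)) =
      Real.exp (∫ t in (0:ℝ)..1, ∑ i, j i *
        ((inner2 ((NormedSpace.exp (t • A)).mulVec (vspin (z i)))
            ((A + Aᴴ).mulVec ((NormedSpace.exp (t • A)).mulVec (vspin (z i))))).re /
          (inner2 ((NormedSpace.exp (t • A)).mulVec (vspin (z i)))
            ((NormedSpace.exp (t • A)).mulVec (vspin (z i)))).re)) :=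
  rho_sq_eq_exp_integral_hamiltonian_general A z j
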